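/- Let x* ∈ ℝ^E with x* ≥ 0 satisfy all rank inequalities x*(F) ≤ r(F) for nonempty F ⊆ E as well as the cardinality bounds c_1 ≤ x*(E) ≤ c_m. If x*(E) = c_q for some q ∈ {1, …, m}, then x* satisfies every rank induced forbidden set inequality, and hence x* ∈ P^c(E). -/

import Mathlib

open Finset

/-- A (loopless) matroid on a finite ground set, given by its independent sets. -/
structure FinMatroid (α : Type*) [Fintype α] [DecidableEq α] where
  Indep : Finset α → Prop
  empty_indep : Indep ∅
  subset_indep : ∀ ⦃I J : Finset α⦄, Indep J → I ⊆ J → Indep I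
  exchange : ∀ ⦃I J : Finset α⦄, Indep I → Indep J → I.card < J.card →
    ∃ e ∈ J \ I, Indep (insert e I)
  loopless : ∀ e : α, Indep {e}

variable {α : Type*} [Fintype α] [DecidableEq α]

open Classical in
/-- The rank of a set: the maximum cardinality of an independent subset. -/
noncomputable def FinMatroid.r (M : FinMatroid α) (F : Finset α) : ℕ :=
  (F.powerset.filter M.Indep).sup Finset.card

/-- incidence vector -/
noncomputable def incVec (I : Finset α) : α → ℝ := fun e => if e ∈ I then 1 else 0

/-- x(S) = ∑_{e ∈ S} x_e -/
noncomputable def fsum (x : α → ℝ) (S : Finset α) : ℝ := ∑ e ∈ S, x e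

/-- closed set -/
def FinMatroid.ClosedSet (M : FinMatroid α) (F : Finset α) : Prop :=
  ∀ e ∉ F, M.r F < M.r (insert e F)

/-- F is separable -/
def FinMatroid.Separable (M : FinMatroid α) (F : Finset α) : Prop :=
  ∃ F₁ F₂ : Finset α, F₁ ≠ ∅ ∧ F₂ ≠ ∅ ∧ Disjoint F₁ F₂ ∧ F₁ ∪ F₂ = F ∧
    M.r F₁ + M.r F₂ ≤ M.r F

def FinMatroid.Inseparable (M : FinMatroid α) (F : Finset α) : Prop :=
  ¬ M.Separable F

/-- the k-rank r^k(F) = k - r(E \ F), as an integer -/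
noncomputable def FinMatroid.krank (M : FinMatroid α) (k : ℕ) (F : Finset α) : ℤ :=
  (k : ℤ) - (M.r Fᶜ : ℤ)

/-- F is k-separable -/
noncomputable def FinMatroid.kSeparable (M : FinMatroid α) (k : ℕ) (F : Finset α) : Prop :=
  ∃ F₁ F₂ : Finset α, F₁ ≠ ∅ ∧ F₂ ≠ ∅ ∧ Disjoint F₁ F₂ ∧ F₁ ∪ F₂ = F ∧
    M.krank k F₁ + M.krank k F₂ = M.krank k F

noncomputable def FinMatroid.kInseparable (M : FinMatroid α) (k : ℕ) (F : Finset α) : Prop :=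
  ¬ M.kSeparable k F

/-- convex hull of incidence vectors of independent sets of cardinality exactly k -/
noncomputable def exactPolytope (M : FinMatroid α) (k : ℕ) : Set (α → ℝ) :=
  convexHull ℝ {x | ∃ I : Finset α, M.Indep I ∧ I.card = k ∧ x = incVec I}

/-- the cardinality constrained matroid polytope P^c(E) -/
noncomputable def cardPolytope (M : FinMatroid α) {m : ℕ} (c : Fin m → ℕ) : Set (α → ℝ) :=
  convexHull ℝ {x | ∃ I : Finset α, M.Indep I ∧ (∃ p : Fin m, I.card = c p) ∧ x = incVec I}

/-- dimension of (the affine hull of) a subset of ℝ^E -/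
noncomputable def polyDim (s : Set (α → ℝ)) : ℕ :=
  Module.finrank ℝ (affineSpan ℝ s).direction

/-- `a · x ≤ a₀` defines a facet of `P` -/
noncomputable def IsFacet (P : Set (α → ℝ)) (a : α → ℝ) (a₀ : ℝ) : Prop :=
  (∀ x ∈ P, ∑ e, a e * x e ≤ a₀) ∧
  polyDim {x ∈ P | ∑ e, a e * x e = a₀} + 1 = polyDim P

/-! The forbidden set inequality follows from `x(F) ≤ r(F)` and `x(E ∖ F) ≥ 0`, because
`x(E) = c_q` does not lie strictly between `c_p` and `c_{p+1}`.

For membership, the polytope `{y ≥ 0, y(F) ≤ r(F) for all F, y(E) = c_q}` is integral. At an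
extreme point `y`, submodularity of `r` makes the tight sets closed under intersection; if `y` had
a fractional coordinate, a minimal tight set containing one would contain a second, no tight set
would separate the two, and shifting mass between them would move `y` along a segment inside the
polytope. By Krein–Milman the polytope is the convex hull of its extreme points, which are
therefore incidence vectors of independent sets of size `c_q`. -/

open Filter Topology

namespace FinMatroid

variable (M : FinMatroid α)

lemma card_le_r {I F : Finset α} (hI : M.Indep I) (hIF : I ⊆ F) : I.card ≤ M.r F := by
  classical
  exact le_sup (f := card) (mem_filter.2 ⟨mem_powerset.2 hIF, hI⟩)

lemma exists_indep_card_eq_r (F : Finset α) : ∃ I ⊆ F, M.Indep I ∧ I.card = M.r F := by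
  classical
  obtain ⟨I, hI, hIr⟩ :=
    exists_mem_eq_sup _ ⟨∅, mem_filter.2 ⟨empty_mem_powerset F, M.empty_indep⟩⟩ card
  rw [mem_filter, mem_powerset] at hI
  exact ⟨I, hI.1, hI.2, hIr.symm⟩

lemma r_le_card (F : Finset α) : M.r F ≤ F.card := by
  obtain ⟨I, hIF, -, hIr⟩ := M.exists_indep_card_eq_r F
  exact hIr ▸ card_le_card hIF

lemma r_singleton (e : α) : M.r {e} = 1 :=
  le_antisymm (M.r_le_card {e}) (M.card_le_r (M.loopless e) subset_rfl)

lemma indep_of_card_le_r {F : Finset α} (h : F.card ≤ M.r F) : M.Indep F := by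
  obtain ⟨I, hIF, hI, hIr⟩ := M.exists_indep_card_eq_r F
  exact eq_of_subset_of_card_le hIF (hIr ▸ h) ▸ hI

/-- Used to borrow submodularity of the rank from Mathlib's matroid theory. -/
def toMatroid : Matroid α :=
  (IndepMatroid.ofFinset Set.univ M.Indep M.empty_indep M.subset_indep
    (fun _ _ hI hJ hIJ => by
      obtain ⟨e, he, hins⟩ := M.exchange hI hJ hIJ
      exact ⟨e, (mem_sdiff.1 he).1, (mem_sdiff.1 he).2, hins⟩)
    (fun _ _ => Set.subset_univ _)).matroid

lemma toMatroid_indep_iff {I : Set α} :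
    M.toMatroid.Indep I ↔ ∀ J : Finset α, (J : Set α) ⊆ I → M.Indep J := by
  simp only [toMatroid, IndepMatroid.matroid_Indep, IndepMatroid.ofFinset_indep']

lemma r_eq_eRk (F : Finset α) : (M.r F : ℕ∞) = M.toMatroid.eRk F := by
  refine le_antisymm ?_ (Matroid.eRk_le_iff.2 fun I hIF hI => ?_)
  · obtain ⟨I, hIF, hI, hIr⟩ := M.exists_indep_card_eq_r F
    rw [← hIr, ← Set.encard_coe_eq_coe_finsetCard]
    exact Matroid.Indep.encard_le_eRk_of_subset
      ((M.toMatroid_indep_iff).2 fun J hJ => M.subset_indep hI (coe_subset.1 hJ)) (coe_subset.2 hIF)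
  · have hfin : I.Finite := F.finite_toSet.subset hIF
    rw [← hfin.coe_toFinset, Set.encard_coe_eq_coe_finsetCard, Nat.cast_le]
    exact M.card_le_r ((M.toMatroid_indep_iff).1 hI _ (by simp))
      (by simpa [← coe_subset] using hIF)

lemma r_inter_add_r_union_le (F G : Finset α) : M.r (F ∩ G) + M.r (F ∪ G) ≤ M.r F + M.r G := by
  have h := M.toMatroid.eRk_inter_add_eRk_union_le F G
  rw [← coe_inter, ← coe_union, ← r_eq_eRk, ← r_eq_eRk, ← r_eq_eRk, ← r_eq_eRk] at h
  exact_mod_cast h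

end FinMatroid

lemma fsum_add_smul {ι : Type*} (y d : ι → ℝ) (t : ℝ) (F : Finset ι) :
    fsum (y + t • d) F = fsum y F + t * fsum d F := by
  simp only [fsum, Pi.add_apply, Pi.smul_apply, smul_eq_mul, sum_add_distrib, mul_sum]

lemma fsum_incVec {ι : Type*} [DecidableEq ι] (I S : Finset ι) :
    fsum (incVec I) S = (S ∩ I).card := by
  simp [fsum, incVec, sum_ite_mem]

lemma continuous_fsum {ι : Type*} (F : Finset ι) : Continuous fun y : ι → ℝ => fsum y F :=
  continuous_finsetSum F fun e _ => continuous_apply e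

lemma Finset.exists_ne_notMem_of_sum_mem {ι G : Type*} [AddCommGroup G] [DecidableEq ι]
    (H : AddSubgroup G) {y : ι → G} {S : Finset ι} (hS : ∑ i ∈ S, y i ∈ H) {e : ι} (he : e ∈ S)
    (hye : y e ∉ H) : ∃ f ∈ S, f ≠ e ∧ y f ∉ H := by
  by_contra! h
  have hrest : ∑ i ∈ S.erase e, y i ∈ H :=
    H.sum_mem fun f hf => h f (mem_of_mem_erase hf) (ne_of_mem_erase hf)
  rw [← add_sum_erase S y he] at hS
  exact hye (by simpa using H.sub_mem hS hrest)

/-- A member `T₀` of `𝒯` minimal among those containing an element outside `H` contains a second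
one, and by minimality every member of `𝒯` containing either of them contains `T₀`. -/
lemma Finset.exists_ne_notMem_forall_mem_iff {ι G : Type*} [AddCommGroup G] [DecidableEq ι]
    (H : AddSubgroup G) (y : ι → G) {𝒯 : Set (Finset ι)}
    (h_inter : ∀ A ∈ 𝒯, ∀ B ∈ 𝒯, A ∩ B ∈ 𝒯) (h_sum : ∀ T ∈ 𝒯, ∑ i ∈ T, y i ∈ H)
    {T : Finset ι} (hT : T ∈ 𝒯) {e : ι} (he : e ∈ T) (hye : y e ∉ H) :
    ∃ e₀ f, e₀ ≠ f ∧ y e₀ ∉ H ∧ y f ∉ H ∧ ∀ G ∈ 𝒯, (e₀ ∈ G ↔ f ∈ G) := by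
  obtain ⟨T₀, ⟨hT₀, e₀, he₀, hye₀⟩, hmin⟩ :=
    wellFounded_lt.has_min {T | T ∈ 𝒯 ∧ ∃ e ∈ T, y e ∉ H} ⟨T, hT, e, he, hye⟩
  have hsub : ∀ a ∈ T₀, y a ∉ H → ∀ G ∈ 𝒯, a ∈ G → T₀ ⊆ G := fun a ha hya G hG haG =>
    inter_eq_left.1 <| eq_of_le_of_not_lt inter_subset_left <|
      hmin _ ⟨h_inter _ hT₀ _ hG, a, mem_inter.2 ⟨ha, haG⟩, hya⟩
  obtain ⟨f, hf, hfe, hyf⟩ := exists_ne_notMem_of_sum_mem H (h_sum _ hT₀) he₀ hye₀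
  exact ⟨e₀, f, hfe.symm, hye₀, hyf, fun G hG =>
    ⟨fun h => hsub e₀ he₀ hye₀ G hG h hf, fun h => hsub f hf hyf G hG h he₀⟩⟩

lemma notMem_extremePoints_of_eventually_add_smul_mem {E : Type*} [AddCommGroup E] [Module ℝ E]
    {P : Set E} {y d : E} (hd : d ≠ 0) (h : ∀ᶠ t in 𝓝 (0 : ℝ), y + t • d ∈ P) :
    y ∉ P.extremePoints ℝ := by
  intro hy
  obtain ⟨ε, hε, hP⟩ := Metric.eventually_nhds_iff.1 h
  have hmem : ∀ t : ℝ, |t| = ε / 2 → y + t • d ∈ P := fun t ht =>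
    hP (by rw [Real.dist_0_eq_abs, ht]; linarith)
  have hseg : y ∈ openSegment ℝ (y + (ε / 2) • d) (y + (-(ε / 2)) • d) :=
    ⟨1 / 2, 1 / 2, by norm_num, by norm_num, by norm_num, by module⟩
  have hfix := ((mem_extremePoints.1 hy).2 _ (hmem _ (abs_of_pos (by linarith)))
    _ (hmem _ (by rw [abs_neg, abs_of_pos (by linarith)])) hseg).1
  rw [add_eq_left, smul_eq_zero] at hfix
  exact hfix.elim (fun h => by linarith) hd

lemma forbidden_ineq_of_notMem_Ioo {a b lo hi r : ℝ} (ha : a ≤ r) (hb : 0 ≤ b)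
    (hlo : lo < r) (hhi : r < hi) (hab : a + b ∉ Set.Ioo lo hi) :
    (hi - r) * a - (r - lo) * b ≤ lo * (hi - r) := by
  rcases le_or_gt (a + b) lo with h | h
  · nlinarith [mul_le_mul_of_nonneg_left (show a ≤ lo by linarith) (sub_nonneg.2 hhi.le),
      mul_nonneg (sub_nonneg.2 hlo.le) hb]
  · have h' : hi ≤ a + b := not_lt.1 fun h' => hab ⟨h, h'⟩
    nlinarith [mul_le_mul_of_nonneg_left (show hi - a ≤ b by linarith) (sub_nonneg.2 hlo.le),
      mul_le_mul_of_nonneg_left ha (sub_nonneg.2 (hlo.trans hhi).le)]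

lemma StrictMono.apply_notMem_Ioo_of_covBy {ι β : Type*} [LinearOrder ι] [Preorder β]
    {f : ι → β} (hf : StrictMono f) {a b : ι} (hab : a ⋖ b) (q : ι) :
    f q ∉ Set.Ioo (f a) (f b) :=
  fun h => hab.2 (hf.lt_iff_lt.1 h.1) (hf.lt_iff_lt.1 h.2)

namespace FinMatroid

variable (M : FinMatroid α)

def exactRankPolytope (k : ℕ) : Set (α → ℝ) :=
  {y | (∀ e, 0 ≤ y e) ∧ (∀ F, fsum y F ≤ M.r F) ∧ fsum y univ = k}

variable {M} {k : ℕ} {y : α → ℝ}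

lemma le_one_of_mem_exactRankPolytope (hy : y ∈ M.exactRankPolytope k) (e : α) : y e ≤ 1 := by
  simpa [fsum, M.r_singleton] using hy.2.1 {e}

lemma convex_exactRankPolytope : Convex ℝ (M.exactRankPolytope k) := by
  rintro y ⟨hy0, hyr, hyk⟩ z ⟨hz0, hzr, hzk⟩ a b ha hb hab
  have hlin : ∀ F, fsum (a • y + b • z) F = a * fsum y F + b * fsum z F := fun F => by
    simp only [fsum, Pi.add_apply, Pi.smul_apply, smul_eq_mul, sum_add_distrib, mul_sum]
  refine ⟨fun e => ?_, fun F => ?_, ?_⟩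
  · have := hy0 e; have := hz0 e
    simp only [Pi.add_apply, Pi.smul_apply, smul_eq_mul]
    positivity
  · calc fsum (a • y + b • z) F = a * fsum y F + b * fsum z F := hlin F
      _ ≤ a * M.r F + b * M.r F :=
        add_le_add (mul_le_mul_of_nonneg_left (hyr F) ha) (mul_le_mul_of_nonneg_left (hzr F) hb)
      _ = M.r F := by rw [← add_mul, hab, one_mul]
  · rw [hlin, hyk, hzk, ← add_mul, hab, one_mul]

lemma isCompact_exactRankPolytope : IsCompact (M.exactRankPolytope k) := by
  have hclosed : IsClosed (M.exactRankPolytope k) := by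
    simp only [exactRankPolytope, Set.ofPred_and, Set.ofPred_forall]
    exact (isClosed_iInter fun e => isClosed_le continuous_const (continuous_apply e)).inter
      ((isClosed_iInter fun F => isClosed_le (continuous_fsum F) continuous_const).inter
        (isClosed_eq (continuous_fsum univ) continuous_const))
  exact (isCompact_univ_pi fun _ => isCompact_Icc).of_isClosed_subset hclosed fun y hy =>
    Set.mem_univ_pi.2 fun e => ⟨hy.1 e, le_one_of_mem_exactRankPolytope hy e⟩

lemma eventually_add_smul_mem_exactRankPolytope (hy : y ∈ M.exactRankPolytope k) {d : α → ℝ}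
    (hd_zero : ∀ e, y e = 0 → d e = 0) (hd_tight : ∀ F, fsum y F = M.r F → fsum d F = 0)
    (hd_univ : fsum d univ = 0) :
    ∀ᶠ t in 𝓝 (0 : ℝ), y + t • d ∈ M.exactRankPolytope k := by
  have hlim : ∀ a b : ℝ, Tendsto (fun t : ℝ => a + t * b) (𝓝 0) (𝓝 a) := fun a b =>
    (by fun_prop : Continuous fun t : ℝ => a + t * b).tendsto' 0 a (by simp)
  have hnonneg : ∀ᶠ t in 𝓝 (0 : ℝ), ∀ e, 0 ≤ y e + t * d e := eventually_all.2 fun e => by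
    rcases (hy.1 e).eq_or_lt with h | h
    · exact Eventually.of_forall fun t => by simp [← h, hd_zero e h.symm]
    · exact ((hlim _ _).eventually_const_lt h).mono fun t ht => ht.le
  have hrank : ∀ᶠ t in 𝓝 (0 : ℝ), ∀ F, fsum y F + t * fsum d F ≤ M.r F :=
    eventually_all.2 fun F => by
      rcases (hy.2.1 F).eq_or_lt with h | h
      · exact Eventually.of_forall fun t => by rw [hd_tight F h, mul_zero, add_zero]; exact h.le
      · exact ((hlim _ _).eventually_lt_const h).mono fun t ht => ht.le
  filter_upwards [hnonneg, hrank] with t ht_nonneg ht_rank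
  refine ⟨ht_nonneg, fun F => ?_, ?_⟩
  · rw [fsum_add_smul]; exact ht_rank F
  · rw [fsum_add_smul, hd_univ, mul_zero, add_zero, hy.2.2]

lemma fsum_inter_eq_r_of_eq_r (hy : ∀ F, fsum y F ≤ M.r F) {F G : Finset α}
    (hF : fsum y F = M.r F) (hG : fsum y G = M.r G) : fsum y (F ∩ G) = M.r (F ∩ G) := by
  have hsub : (M.r (F ∩ G) : ℝ) + M.r (F ∪ G) ≤ M.r F + M.r G := by
    exact_mod_cast M.r_inter_add_r_union_le F G
  have hmod : fsum y (F ∪ G) + fsum y (F ∩ G) = fsum y F + fsum y G := sum_union_inter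
  linarith [hy (F ∩ G), hy (F ∪ G)]

lemma mem_intCast_range_of_mem_extremePoints (hy : y ∈ (M.exactRankPolytope k).extremePoints ℝ)
    (e : α) : y e ∈ (Int.castAddHom ℝ).range := by
  have hyP := hy.1
  by_contra hye
  set 𝒯 : Set (Finset α) := {G | fsum y G = M.r G ∨ G = univ}
  have h_inter : ∀ A ∈ 𝒯, ∀ B ∈ 𝒯, A ∩ B ∈ 𝒯 := by
    rintro A (hA | rfl) B (hB | rfl)
    exacts [Or.inl (fsum_inter_eq_r_of_eq_r hyP.2.1 hA hB), by rw [inter_univ]; exact Or.inl hA,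
      by rw [univ_inter]; exact Or.inl hB, by rw [inter_self]; exact Or.inr rfl]
  have h_sum : ∀ T ∈ 𝒯, ∑ i ∈ T, y i ∈ (Int.castAddHom ℝ).range := by
    rintro T (hT | rfl)
    exacts [⟨M.r T, by simpa [fsum] using hT.symm⟩, ⟨k, by simpa [fsum] using hyP.2.2.symm⟩]
  obtain ⟨e₀, f, hne, hy₀, hyf, hiff⟩ :=
    exists_ne_notMem_forall_mem_iff _ y h_inter h_sum (Or.inr rfl) (mem_univ e) hye
  refine notMem_extremePoints_of_eventually_add_smul_mem (d := Pi.single e₀ 1 - Pi.single f 1)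
    (fun h => by simpa [hne] using congrFun h e₀)
    (eventually_add_smul_mem_exactRankPolytope hyP (fun a ha => ?_) (fun F hF => ?_) ?_) hy
  · have ha₀ : a ≠ e₀ := by rintro rfl; exact hy₀ (ha ▸ zero_mem _)
    have haf : a ≠ f := by rintro rfl; exact hyf (ha ▸ zero_mem _)
    simp [ha₀, haf]
  · simp [fsum, sum_sub_distrib, sum_pi_single', hiff F (Or.inl hF)]
  · simp [fsum, sum_sub_distrib, sum_pi_single']

lemma exists_indep_eq_incVec (hy : y ∈ M.exactRankPolytope k)
    (hint : ∀ e, y e ∈ (Int.castAddHom ℝ).range) :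
    ∃ I, M.Indep I ∧ I.card = k ∧ y = incVec I := by
  set I := univ.filter fun e => y e = 1
  have hyI : y = incVec I := funext fun e => by
    obtain ⟨z, hz⟩ := hint e
    have h0 := hy.1 e
    have h1 := le_one_of_mem_exactRankPolytope hy e
    simp only [Int.coe_castAddHom] at hz
    rw [← hz] at h0 h1
    have : z = 0 ∨ z = 1 := by
      have : (0 : ℤ) ≤ z := by exact_mod_cast h0
      have : z ≤ 1 := by exact_mod_cast h1
      omega
    rcases this with rfl | rfl <;> simp [incVec, I, ← hz]
  have hcard : (I.card : ℝ) = k := by simpa [hyI, fsum_incVec] using hy.2.2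
  have hrank : (I.card : ℝ) ≤ M.r I := by simpa [hyI, fsum_incVec] using hy.2.1 I
  exact ⟨I, M.indep_of_card_le_r (by exact_mod_cast hrank), by exact_mod_cast hcard, hyI⟩

theorem exactRankPolytope_subset_exactPolytope : M.exactRankPolytope k ⊆ exactPolytope M k := by
  have hfin : {x | ∃ I, M.Indep I ∧ I.card = k ∧ x = incVec I}.Finite :=
    (Set.finite_range incVec).subset fun _ ⟨I, _, _, hI⟩ => ⟨I, hI.symm⟩
  refine (closure_convexHull_extremePoints isCompact_exactRankPolytope
    convex_exactRankPolytope).symm.subset.trans (closure_minimal (convexHull_mono fun y hy => ?_)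
      (hfin.isClosed_convexHull ℝ))
  exact exists_indep_eq_incVec hy.1 (mem_intCast_range_of_mem_extremePoints hy)

end FinMatroid

/-- if x* satisfies the rank inequalities, the cardinality
bounds, and x*(E) = c_q, then x* satisfies all forbidden set inequalities and
lies in P^c(E). -/
theorem feasible_cardinality_in_polytope {α : Type*} [Fintype α] [DecidableEq α]
    (M : FinMatroid α)
    {m : ℕ} (c : Fin m → ℕ) (hmono : StrictMono c)
    (x : α → ℝ) (hnn : ∀ e : α, 0 ≤ x e)
    (hrank : ∀ F : Finset α, F ≠ ∅ → fsum x F ≤ (M.r F : ℝ))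
    (q : Fin m) (hq : fsum x Finset.univ = (c q : ℝ)) :
    (∀ (F : Finset α) (p : Fin m) (hp : p.val + 1 < m),
      c p < M.r F → M.r F < c ⟨p.val + 1, hp⟩ → ((c ⟨p.val + 1, hp⟩ : ℝ) - M.r F) * fsum x F - ((M.r F : ℝ) - c p) * fsum x Fᶜ ≤ (c p : ℝ) * ((c ⟨p.val + 1, hp⟩ : ℝ) - M.r F)) ∧
    x ∈ cardPolytope M c := by
  have hrank' : ∀ F, fsum x F ≤ M.r F := fun F => by
    rcases eq_or_ne F ∅ with rfl | hF
    · simp [fsum]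
    · exact hrank F hF
  refine ⟨fun F p hp hlo hhi => ?_, ?_⟩
  · have hcov : p ⋖ ⟨p.val + 1, hp⟩ := Fin.covBy_iff.2 (Nat.covBy_iff_add_one_eq.2 rfl)
    refine forbidden_ineq_of_notMem_Ioo (hrank' F) (sum_nonneg fun e _ => hnn e)
      (by exact_mod_cast hlo) (by exact_mod_cast hhi) ?_
    rw [fsum, fsum, sum_add_sum_compl, ← fsum, hq]
    exact (Nat.strictMono_cast.comp hmono).apply_notMem_Ioo_of_covBy hcov q
  · refine convexHull_mono ?_
      (M.exactRankPolytope_subset_exactPolytope (k := c q) ⟨hnn, hrank', hq⟩)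
    rintro _ ⟨I, hI, hcard, rfl⟩
    exact ⟨I, hI, ⟨q, hcard⟩, rfl⟩
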